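/- In the graph-based preprocessing step: if W is a winning region of the belief-support MDP and z is an observation such that there exists an action α with, for every state s with obs(s) = z, Post(s,α) entirely contained in the union of the belief supports of W in a way that the successor belief supports are in W, then the full-observation belief support b_z = {s | obs(s) = z} is winning and W ∪ {b_z} (closed under subsets) is again a winning region. -/

import Mathlib

open scoped ENNReal Classical

/-- A POMDP: transition function `P` and observation function `obs`. -/
structure POMDP (S Act Ω : Type) where
  P : S → Act → PMF S
  obs : S → Ω

namespace POMDP

variable {S Act Ω : Type}

/-- A history-dependent observation-based policy: maps the observation-action
history and the current observation to a distribution over actions. -/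
def Policy (Act Ω : Type) := List (Ω × Act) → Ω → PMF Act

/-- Probability to reach `T` within `n` steps, starting in state `s` with history `h`. -/
noncomputable def reachN (M : POMDP S Act Ω) (σ : Policy Act Ω) (T : Set S) :
    ℕ → List (Ω × Act) → S → ℝ≥0∞
  | 0, _, s => if s ∈ T then 1 else 0
  | n + 1, h, s =>
    if s ∈ T then 1
    else ∑' α : Act, σ h (M.obs s) α *
      ∑' s' : S, M.P s α s' * M.reachN σ T n (h ++ [(M.obs s, α)]) s'

/-- Probability to eventually reach `T` from initial belief `b` under policy `σ`. -/
noncomputable def prReach (M : POMDP S Act Ω) (σ : Policy Act Ω) (T : Set S)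
    (b : PMF S) : ℝ≥0∞ :=
  ⨆ n, ∑' s : S, b s * M.reachN σ T n [] s

/-- A policy is winning from belief `b`: AVOID reached with probability 0,
REACH reached with probability 1. -/
def WinningPolicyFrom (M : POMDP S Act Ω) (REACH AVOID : Set S)
    (σ : Policy Act Ω) (b : PMF S) : Prop :=
  M.prReach σ AVOID b = 0 ∧ M.prReach σ REACH b = 1

/-- A belief is winning if some winning policy exists from it. -/
def WinningBelief (M : POMDP S Act Ω) (REACH AVOID : Set S) (b : PMF S) : Prop :=
  ∃ σ, M.WinningPolicyFrom REACH AVOID σ b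

/-- A set of states is absorbing. -/
def Absorbing (M : POMDP S Act Ω) (T : Set S) : Prop :=
  ∀ s ∈ T, ∀ α, M.P s α = PMF.pure s

/-- A belief support: a nonempty set of states sharing a common observation. -/
def IsBeliefSupport (M : POMDP S Act Ω) (b : Set S) : Prop :=
  b.Nonempty ∧ ∀ s ∈ b, ∀ s' ∈ b, M.obs s = M.obs s'

/-- A policy is winning from a belief support `b` if it is winning from every
belief whose support is `b`. -/
def WinningFromSupport (M : POMDP S Act Ω) (REACH AVOID : Set S)
    (σ : Policy Act Ω) (b : Set S) : Prop :=
  ∀ β : PMF S, β.support = b → M.WinningPolicyFrom REACH AVOID σ β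

/-- A belief support is winning if some policy is winning from it. -/
def WinningSupport (M : POMDP S Act Ω) (REACH AVOID : Set S) (b : Set S) : Prop :=
  ∃ σ, M.WinningFromSupport REACH AVOID σ b

end POMDP

namespace POMDP

variable {S Act Ω : Type}

/-- The successor belief support of `b` under action `α`, conditioned on
observation `z`. -/
noncomputable def succSupport (M : POMDP S Act Ω) [Fintype S]
    (b : Finset S) (α : Act) (z : Ω) : Finset S :=
  Finset.univ.filter (fun s' => M.obs s' = z ∧ ∃ s ∈ b, M.P s α s' ≠ 0)

/-- The set of possible successor belief supports of `b` under action `α`. -/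
noncomputable def Post (M : POMDP S Act Ω) [Fintype S]
    (b : Finset S) (α : Act) : Set (Finset S) :=
  {b' | ∃ z : Ω, b' = M.succSupport b α z ∧ b'.Nonempty}

/-- The belief-support MDP of a POMDP, represented as a fully observable POMDP
(observation function is the identity). Transition probabilities are an arbitrary
positive distribution over the successor supports, realized by sampling a
uniform state of the support and a transition of the POMDP. -/
noncomputable def belSup (M : POMDP S Act Ω) [Fintype S] :
    POMDP (Finset S) Act (Finset S) where
  P := fun b α =>
    if h : b.Nonempty then
      PMF.map (fun s' => M.succSupport b α (M.obs s'))
        ((PMF.uniformOfFinset b h).bind fun s => M.P s α)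
    else PMF.pure b
  obs := id

/-- Lifted AVOID set: belief supports intersecting AVOID. -/
def liftedAvoid (AVOID : Set S) : Set (Finset S) := {b | ∃ s ∈ b, s ∈ AVOID}

/-- Lifted REACH set: belief supports contained in REACH. -/
def liftedReach (REACH : Set S) : Set (Finset S) := {b | ∀ s ∈ b, s ∈ REACH}

end POMDP
/-! Play `α` first and afterwards the winning policy of the successor support `b' ∈ W` that
the play has entered; `b'` is determined by the observation made after the first step. Being
winning from a support is a statewise condition (from each state of the support AVOID is reached
with probability 0 and REACH with probability 1), and the first-step decomposition of the
reachability probabilities of the composed policy transfers it from the successors to every state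
of `b_z`. No state of `b_z` lies in AVOID: such a state would be its own successor under `α`, as
AVOID is absorbing, and could not be winning. -/

theorem ENNReal.sum_mul_eq_one_iff {ι : Type*} {s : Finset ι} {w x : ι → ℝ≥0∞}
    (hw : ∑ i ∈ s, w i = 1) (hx : ∀ i ∈ s, x i ≤ 1) :
    ∑ i ∈ s, w i * x i = 1 ↔ ∀ i ∈ s, w i ≠ 0 → x i = 1 := by
  have hsplit : ∑ i ∈ s, w i * (1 - x i) + ∑ i ∈ s, w i * x i = 1 := by
    rw [← Finset.sum_add_distrib]
    refine (Finset.sum_congr rfl fun i hi => ?_).trans hw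
    rw [← mul_add, tsub_add_cancel_of_le (hx i hi), mul_one]
  constructor
  · intro h i hi hwi
    rw [h] at hsplit
    have hdefect := Finset.sum_eq_zero_iff.1
      ((ENNReal.add_left_inj ENNReal.one_ne_top).1 (hsplit.trans (zero_add 1).symm)) i hi
    exact le_antisymm (hx i hi) (tsub_eq_zero_iff_le.1 ((mul_eq_zero.1 hdefect).resolve_left hwi))
  · intro h
    rwa [Finset.sum_eq_zero fun i hi => ?_, zero_add] at hsplit
    by_cases hwi : w i = 0
    · rw [hwi, zero_mul]
    · rw [h i hi hwi, tsub_self, mul_zero]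

theorem PMF.sum_mul_eq_of_forall {α : Type*} [Fintype α] (p : PMF α) {f : α → ℝ≥0∞} {c : ℝ≥0∞}
    (h : ∀ a, p a ≠ 0 → f a = c) : ∑ a, p a * f a = c := by
  calc ∑ a, p a * f a = ∑ a, p a * c := Finset.sum_congr rfl fun a _ => by
          by_cases ha : p a = 0
          · rw [ha, zero_mul, zero_mul]
          · rw [h a ha]
    _ = c := by rw [← Finset.sum_mul, ← tsum_fintype (L := .unconditional α), p.tsum_coe, one_mul]

namespace POMDP

variable {S Act Ω : Type} (M : POMDP S Act Ω)

theorem reachN_le_one (σ : Policy Act Ω) (T : Set S) :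
    ∀ n h s, M.reachN σ T n h s ≤ 1
  | 0, _, s => by rw [reachN]; split_ifs <;> simp
  | n + 1, h, s => by
    rw [reachN]
    split_ifs
    · rfl
    · calc _ ≤ ∑' a, σ h (M.obs s) a * ∑' s', M.P s a s' * 1 := by
            gcongr with a s'
            exact reachN_le_one σ T n _ s'
        _ = 1 := by simp

theorem reachN_le_reachN_succ (σ : Policy Act Ω) (T : Set S) :
    ∀ n h s, M.reachN σ T n h s ≤ M.reachN σ T (n + 1) h s
  | 0, h, s => by rw [reachN, reachN]; split_ifs <;> simp
  | n + 1, h, s => by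
    rw [reachN, reachN]
    split_ifs
    · rfl
    · gcongr with a s'
      exact reachN_le_reachN_succ σ T n _ s'

theorem monotone_reachN (σ : Policy Act Ω) (T : Set S) (h : List (Ω × Act)) (s : S) :
    Monotone fun n => M.reachN σ T n h s :=
  monotone_nat_of_le_succ fun n => M.reachN_le_reachN_succ σ T n h s

noncomputable def reachProb (σ : Policy Act Ω) (T : Set S) (s : S) : ℝ≥0∞ :=
  ⨆ n, M.reachN σ T n [] s

theorem reachProb_le_one (σ : Policy Act Ω) (T : Set S) (s : S) : M.reachProb σ T s ≤ 1 :=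
  iSup_le fun n => M.reachN_le_one σ T n [] s

theorem reachProb_of_mem (σ : Policy Act Ω) {T : Set S} {s : S} (hs : s ∈ T) :
    M.reachProb σ T s = 1 :=
  le_antisymm (M.reachProb_le_one σ T s) (le_iSup_of_le 0 (by simp [reachN, hs]))

/-- Play `α`, then `τ z'` on the history from the second step on, where `z'` is the observation
made after the first step. -/
noncomputable def Policy.cons (α : Act) (τ : Ω → Policy Act Ω) : Policy Act Ω := fun h o =>
  match h with
  | [] => PMF.pure α
  | _ :: h => τ ((h.map Prod.fst).headD o) h o

theorem reachN_cons_cons (α : Act) (τ : Ω → Policy Act Ω) (T : Set S) (e : Ω × Act) :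
    ∀ n h s, M.reachN (Policy.cons α τ) T n (e :: h) s =
      M.reachN (τ ((h.map Prod.fst).headD (M.obs s))) T n h s
  | 0, _, _ => by rw [reachN, reachN]
  | n + 1, h, s => by
    have hobs : ∀ a s', ((h ++ [(M.obs s, a)]).map Prod.fst).headD (M.obs s') =
        (h.map Prod.fst).headD (M.obs s) := by
      intro a s'; cases h <;> rfl
    rw [reachN, reachN]
    split_ifs
    · rfl
    · simp only [Policy.cons, List.cons_append, reachN_cons_cons α τ T e n, hobs]

theorem reachN_cons_succ_nil (α : Act) (τ : Ω → Policy Act Ω) (T : Set S) (n : ℕ) (s : S) :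
    M.reachN (Policy.cons α τ) T (n + 1) [] s =
      if s ∈ T then 1 else ∑' s', M.P s α s' * M.reachN (τ (M.obs s')) T n [] s' := by
  rw [reachN]
  split_ifs
  · rfl
  · simp [Policy.cons, reachN_cons_cons]

theorem prReach_eq_sum [Fintype S] (σ : Policy Act Ω) (T : Set S) (β : PMF S) :
    M.prReach σ T β = ∑ s, β s * M.reachProb σ T s := by
  simp_rw [prReach, tsum_fintype, reachProb, ENNReal.mul_iSup]
  exact (ENNReal.finsetSum_iSup_of_monotone fun s _ _ hij => by
    gcongr; exact M.monotone_reachN σ T [] s hij).symm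

theorem reachProb_cons [Fintype S] (α : Act) (τ : Ω → Policy Act Ω) (T : Set S) (s : S) :
    M.reachProb (Policy.cons α τ) T s =
      if s ∈ T then 1 else ∑ s', M.P s α s' * M.reachProb (τ (M.obs s')) T s' := by
  rw [reachProb, ← (M.monotone_reachN _ T [] s).iSup_nat_add 1]
  simp_rw [reachN_cons_succ_nil]
  split_ifs
  · exact iSup_const
  · simp_rw [tsum_fintype, reachProb, ENNReal.mul_iSup]
    exact (ENNReal.finsetSum_iSup_of_monotone fun s' _ _ hij => by
      gcongr; exact M.monotone_reachN _ T [] s' hij).symm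

def WinningPolicyAt (REACH AVOID : Set S) (σ : Policy Act Ω) (s : S) : Prop :=
  M.reachProb σ AVOID s = 0 ∧ M.reachProb σ REACH s = 1

variable {M} {REACH AVOID : Set S} {σ : Policy Act Ω}

theorem WinningPolicyAt.notMem_avoid {s : S} (h : M.WinningPolicyAt REACH AVOID σ s) :
    s ∉ AVOID := fun hs =>
  one_ne_zero ((M.reachProb_of_mem σ hs).symm.trans h.1)

variable [Fintype S]

theorem winningPolicyFrom_iff {β : PMF S} :
    M.WinningPolicyFrom REACH AVOID σ β ↔ ∀ s ∈ β.support, M.WinningPolicyAt REACH AVOID σ s := by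
  have hβ : ∑ s, β s = 1 := by rw [← tsum_fintype (L := .unconditional S), β.tsum_coe]
  simp only [WinningPolicyFrom, WinningPolicyAt, prReach_eq_sum, Finset.sum_eq_zero_iff,
    mul_eq_zero, ENNReal.sum_mul_eq_one_iff hβ fun s _ => M.reachProb_le_one σ REACH s,
    PMF.mem_support_iff, Finset.mem_univ, true_imp_iff]
  exact ⟨fun h s hs => ⟨(h.1 s).resolve_left hs, h.2 s hs⟩,
    fun h => ⟨fun s => or_iff_not_imp_left.2 fun hs => (h s hs).1, fun s hs => (h s hs).2⟩⟩

theorem winningFromSupport_iff {b : Set S} :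
    M.WinningFromSupport REACH AVOID σ b ↔ ∀ s ∈ b, M.WinningPolicyAt REACH AVOID σ s := by
  refine ⟨fun h s hs => ?_, fun h β hβ => winningPolicyFrom_iff.2 fun s hs => h s (hβ ▸ hs)⟩
  have hne : b.toFinset.Nonempty := ⟨s, Set.mem_toFinset.2 hs⟩
  have hsupp : (PMF.uniformOfFinset _ hne).support = b := by
    rw [PMF.support_uniformOfFinset, Set.coe_toFinset]
  exact winningPolicyFrom_iff.1 (h _ hsupp) s (by rwa [hsupp])

theorem winningPolicyAt_cons {α : Act} {τ : Ω → Policy Act Ω} {s : S} (hs : s ∉ AVOID)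
    (hsucc : ∀ s', M.P s α s' ≠ 0 → M.WinningPolicyAt REACH AVOID (τ (M.obs s')) s') :
    M.WinningPolicyAt REACH AVOID (Policy.cons α τ) s := by
  refine ⟨?_, ?_⟩
  · rw [reachProb_cons, if_neg hs]
    exact (M.P s α).sum_mul_eq_of_forall fun s' h => (hsucc s' h).1
  · rw [reachProb_cons]
    split_ifs
    · rfl
    · exact (M.P s α).sum_mul_eq_of_forall fun s' h => (hsucc s' h).2

end POMDP

theorem graph_preprocessing_sound_general {S Act Ω : Type} [Fintype S]
    (M : POMDP S Act Ω) (REACH AVOID : Set S)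
    (hA : M.Absorbing AVOID)
    (W : Set (Finset S))
    (hwin : ∀ b ∈ W, M.WinningSupport REACH AVOID (↑b : Set S))
    (z : Ω) (α : Act)
    (hpost : M.Post (Finset.univ.filter (fun s => M.obs s = z)) α ⊆ W) :
    M.WinningSupport REACH AVOID {s | M.obs s = z} ∧
    ∀ b ∈ W ∪ {Finset.univ.filter (fun s => M.obs s = z)},
      M.WinningSupport REACH AVOID (↑b : Set S) := by
  set bz := Finset.univ.filter (fun s => M.obs s = z)
  have : Nonempty (POMDP.Policy Act Ω) := ⟨fun _ _ => PMF.pure α⟩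
  choose! σ hσ using hwin
  have hsucc : ∀ s ∈ bz, ∀ s', M.P s α s' ≠ 0 →
      M.WinningPolicyAt REACH AVOID (σ (M.succSupport bz α (M.obs s'))) s' := by
    intro s hs s' hs'
    have hmem : s' ∈ M.succSupport bz α (M.obs s') := by
      simpa [POMDP.succSupport] using ⟨s, hs, hs'⟩
    exact POMDP.winningFromSupport_iff.1 (hσ _ (hpost ⟨_, rfl, s', hmem⟩)) s' hmem
  have hbz : M.WinningSupport REACH AVOID {s | M.obs s = z} := by
    refine ⟨POMDP.Policy.cons α fun z' => σ (M.succSupport bz α z'),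
      POMDP.winningFromSupport_iff.2 fun s hs => ?_⟩
    have hs : s ∈ bz := by simpa [bz] using hs
    have hsA : s ∉ AVOID := fun hsA => (hsucc s hs s (by simp [hA s hsA α])).notMem_avoid hsA
    exact POMDP.winningPolicyAt_cons hsA (hsucc s hs)
  refine ⟨hbz, ?_⟩
  rintro b (hb | rfl)
  exacts [⟨σ b, hσ b hb⟩, by simpa [bz] using hbz]

/-- Graph-based preprocessing step. If `W` is a winning region
(closed under nonempty subsets) and for observation `z` there is an action `α`
such that all successors of the full observation support `b_z` lie in `W`, then
`b_z` is winning, and `W ∪ {b_z}` is again a winning region. -/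
theorem graph_preprocessing_sound {S Act Ω : Type} [Fintype S] [Fintype Act]
    (M : POMDP S Act Ω) (REACH AVOID : Set S)
    (hdisj : Disjoint REACH AVOID)
    (hR : M.Absorbing REACH) (hA : M.Absorbing AVOID)
    (W : Set (Finset S))
    (hwin : ∀ b ∈ W, M.WinningSupport REACH AVOID (↑b : Set S))
    (hsubclosed : ∀ b ∈ W, ∀ b' : Finset S, b' ⊆ b → b'.Nonempty → b' ∈ W)
    (z : Ω) (hz : ∃ s : S, M.obs s = z) (α : Act)
    (hpost : M.Post (Finset.univ.filter (fun s => M.obs s = z)) α ⊆ W) :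
    M.WinningSupport REACH AVOID {s | M.obs s = z} ∧
    ∀ b ∈ W ∪ {Finset.univ.filter (fun s => M.obs s = z)},
      M.WinningSupport REACH AVOID (↑b : Set S) :=
  graph_preprocessing_sound_general M REACH AVOID hA W hwin z α hpost
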